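/- arXiv:1403.3211 — 9 statements merged into one kernel-verified Lean document; each statement's English description precedes it below -/
import Mathlib

section
/- The system of equations kl = 1, μl³ + k³ = l with k, l > 0 has a real solution if and only if μ ≤ 2√3/9. Moreover, if μ ≤ 0 or μ = 2√3/9 the solution is unique, and if 0 < μ < 2√3/9 there are exactly two distinct solutions. -/
/-! With `l = 1 / k` the system becomes `μ = m - m³` for `m = k²`, so its solutions correspond
bijectively to the positive roots of `m - m³ = μ` via `m ↦ (√m, 1 / √m)`. On `[0, ∞)` the map
`m ↦ m - m³` increases up to `1 / √3`, where it attains its maximum `2√3 / 9`, and decreases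
afterwards to `-∞`; counting the preimages of `μ` gives the three cases. -/

open Real Set

lemma two_mul_sqrt_three_div_nine_sub_self_sub_cube (m : ℝ) :
    2 * √3 / 9 - (m - m ^ 3) = (m - √3 / 3) ^ 2 * (m + 2 * √3 / 3) := by
  linear_combination (m / 3 - 2 * √3 / 27) * sq_sqrt (show (0 : ℝ) ≤ 3 by norm_num)

lemma self_sub_cube_le {m : ℝ} (hm : 0 ≤ m) : m - m ^ 3 ≤ 2 * √3 / 9 := by
  have := two_mul_sqrt_three_div_nine_sub_self_sub_cube m
  have : 0 ≤ (m - √3 / 3) ^ 2 * (m + 2 * √3 / 3) := by positivity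
  linarith

lemma self_sub_cube_eq_iff {m : ℝ} (hm : 0 ≤ m) : m - m ^ 3 = 2 * √3 / 9 ↔ m = √3 / 3 := by
  have hfac := two_mul_sqrt_three_div_nine_sub_self_sub_cube m
  have hpos : 0 < m + 2 * √3 / 3 := by positivity
  constructor
  · intro h
    rw [h, sub_self, eq_comm, mul_eq_zero, sq_eq_zero_iff, sub_eq_zero] at hfac
    exact hfac.resolve_right hpos.ne'
  · rintro rfl
    linear_combination -hfac

lemma strictMonoOn_self_sub_cube : StrictMonoOn (fun m : ℝ ↦ m - m ^ 3) (Icc 0 (√3 / 3)) := by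
  rintro a ⟨ha, -⟩ b ⟨-, hb⟩ hab
  have h3 := sq_sqrt (show (0 : ℝ) ≤ 3 by norm_num)
  have : a ^ 2 + a * b + b ^ 2 < 1 := by nlinarith
  nlinarith

lemma strictAntiOn_self_sub_cube : StrictAntiOn (fun m : ℝ ↦ m - m ^ 3) (Ici (√3 / 3)) := by
  rintro a (ha : √3 / 3 ≤ a) b - hab
  have h3 := sq_sqrt (show (0 : ℝ) ≤ 3 by norm_num)
  have hs : 0 ≤ √3 / 3 := by positivity
  have : 1 < a ^ 2 + a * b + b ^ 2 := by nlinarith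
  nlinarith

lemma one_le_of_self_sub_cube_nonpos {m : ℝ} (hm : 0 < m) (h : m - m ^ 3 ≤ 0) : 1 ≤ m := by
  by_contra! h1
  nlinarith [mul_pos hm (show 0 < 1 - m ^ 2 by nlinarith)]

lemma sqrt_three_div_three_sub_cube : √3 / 3 - (√3 / 3) ^ 3 = 2 * √3 / 9 :=
  (self_sub_cube_eq_iff (by positivity)).2 rfl

lemma sqrt_three_div_three_le_one : √3 / 3 ≤ 1 := by
  nlinarith [sq_sqrt (show (0 : ℝ) ≤ 3 by norm_num), sqrt_nonneg 3]

section

variable {μ : ℝ}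

lemma exists_self_sub_cube_eq_of_le (h : μ ≤ 2 * √3 / 9) :
    ∃ m, √3 / 3 ≤ m ∧ m - m ^ 3 = μ := by
  have hb : √3 / 3 ≤ 1 + |μ| := sqrt_three_div_three_le_one.trans (by simp)
  -- for `x ≥ 1` one has `x - x³ ≤ 1 - x`
  have hval : (1 + |μ|) - (1 + |μ|) ^ 3 ≤ μ := by
    have hx : 0 ≤ |μ| := abs_nonneg μ
    nlinarith [mul_nonneg hx (show 0 ≤ (1 + |μ|) ^ 2 + (1 + |μ|) - 1 by nlinarith), neg_abs_le μ]
  obtain ⟨m, ⟨hm, -⟩, hroot⟩ := intermediate_value_Icc' hb (f := fun m : ℝ ↦ m - m ^ 3)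
    (by fun_prop) ⟨hval, sqrt_three_div_three_sub_cube ▸ h⟩
  exact ⟨m, hm, hroot⟩

lemma exists_self_sub_cube_eq_of_pos (h0 : 0 < μ) (h : μ ≤ 2 * √3 / 9) :
    ∃ m ∈ Ioc 0 (√3 / 3), m - m ^ 3 = μ :=
  intermediate_value_Ioc (by positivity) (f := fun m : ℝ ↦ m - m ^ 3) (by fun_prop)
    ⟨by simpa using h0, sqrt_three_div_three_sub_cube ▸ h⟩

lemma exists_pos_self_sub_cube_eq (h : μ ≤ 2 * √3 / 9) : ∃ m, 0 < m ∧ m - m ^ 3 = μ := by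
  obtain ⟨m, hm, hroot⟩ := exists_self_sub_cube_eq_of_le h
  exact ⟨m, lt_of_lt_of_le (by positivity : (0 : ℝ) < √3 / 3) hm, hroot⟩

lemma pos_self_sub_cube_eq_unique (hμ : μ ≤ 0 ∨ μ = 2 * √3 / 9) {a b : ℝ} (ha : 0 < a) (hb : 0 < b)
    (hra : a - a ^ 3 = μ) (hrb : b - b ^ 3 = μ) : a = b := by
  rcases hμ with hμ | rfl
  · have hge : ∀ m, 0 < m → m - m ^ 3 = μ → m ∈ Ici (√3 / 3) := fun m hm hr ↦
      sqrt_three_div_three_le_one.trans (one_le_of_self_sub_cube_nonpos hm (hr ▸ hμ))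
    exact strictAntiOn_self_sub_cube.injOn (hge a ha hra) (hge b hb hrb) (hra.trans hrb.symm)
  · rw [(self_sub_cube_eq_iff ha.le).1 hra, (self_sub_cube_eq_iff hb.le).1 hrb]

lemma exists_two_pos_self_sub_cube_eq (h0 : 0 < μ) (h : μ < 2 * √3 / 9) :
    ∃ a b, a ≠ b ∧ 0 < a ∧ 0 < b ∧ a - a ^ 3 = μ ∧ b - b ^ 3 = μ ∧
      ∀ m, 0 < m → m - m ^ 3 = μ → m = a ∨ m = b := by
  obtain ⟨a, ⟨ha0, has⟩, hra⟩ := exists_self_sub_cube_eq_of_pos h0 h.le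
  obtain ⟨b, hsb, hrb⟩ := exists_self_sub_cube_eq_of_le h.le
  have hb0 : 0 < b := lt_of_lt_of_le (by positivity) hsb
  have hbs : b ≠ √3 / 3 := fun hb ↦ h.ne (hrb ▸ (self_sub_cube_eq_iff hb0.le).2 hb)
  refine ⟨a, b, (has.trans_lt (hsb.lt_of_ne' hbs)).ne, ha0, hb0, hra, hrb, fun m hm hr ↦ ?_⟩
  rcases le_total m (√3 / 3) with hms | hsm
  · exact .inl (strictMonoOn_self_sub_cube.injOn ⟨hm.le, hms⟩ ⟨ha0.le, has⟩ (hr.trans hra.symm))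
  · exact .inr (strictAntiOn_self_sub_cube.injOn hsm hsb (hr.trans hrb.symm))

def IsKLSolution (μ : ℝ) (p : ℝ × ℝ) : Prop :=
  0 < p.1 ∧ 0 < p.2 ∧ p.1 * p.2 = 1 ∧ μ * p.2 ^ 3 + p.1 ^ 3 = p.2

noncomputable def solOfRoot (m : ℝ) : ℝ × ℝ := (√m, (√m)⁻¹)

lemma isKLSolution_iff {μ : ℝ} {p : ℝ × ℝ} :
    IsKLSolution μ p ↔ ∃ m, 0 < m ∧ m - m ^ 3 = μ ∧ p = solOfRoot m := by
  constructor
  · rintro ⟨hk, -, hkl, heq⟩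
    obtain ⟨k, l⟩ := p
    dsimp only at hk hkl heq
    refine ⟨k ^ 2, by positivity, ?_, ?_⟩
    · linear_combination (-k ^ 3) * heq + (μ * (k * l) ^ 2 + μ * (k * l) + μ - k ^ 2) * hkl
    · rw [solOfRoot, sqrt_sq hk.le, eq_inv_of_mul_eq_one_right hkl]
  · rintro ⟨m, hm, hroot, rfl⟩
    have hk : 0 < √m := sqrt_pos.2 hm
    rw [← sq_sqrt hm.le] at hroot
    refine ⟨hk, inv_pos.2 hk, mul_inv_cancel₀ hk.ne', ?_⟩
    simp only [solOfRoot]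
    field_simp
    linear_combination -hroot

end

theorem system_kl_solutions (μ : ℝ) :
    ((∃ k l : ℝ, 0 < k ∧ 0 < l ∧ k * l = 1 ∧ μ * l ^ 3 + k ^ 3 = l) ↔
      μ ≤ 2 * Real.sqrt 3 / 9) ∧
    ((μ ≤ 0 ∨ μ = 2 * Real.sqrt 3 / 9) →
      ∃! p : ℝ × ℝ, 0 < p.1 ∧ 0 < p.2 ∧ p.1 * p.2 = 1 ∧ μ * p.2 ^ 3 + p.1 ^ 3 = p.2) ∧
    ((0 < μ ∧ μ < 2 * Real.sqrt 3 / 9) →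
      ∃ p q : ℝ × ℝ, p ≠ q ∧
        (0 < p.1 ∧ 0 < p.2 ∧ p.1 * p.2 = 1 ∧ μ * p.2 ^ 3 + p.1 ^ 3 = p.2) ∧
        (0 < q.1 ∧ 0 < q.2 ∧ q.1 * q.2 = 1 ∧ μ * q.2 ^ 3 + q.1 ^ 3 = q.2) ∧
        ∀ r : ℝ × ℝ, (0 < r.1 ∧ 0 < r.2 ∧ r.1 * r.2 = 1 ∧ μ * r.2 ^ 3 + r.1 ^ 3 = r.2) →
          r = p ∨ r = q) := by
  have hsol : ∀ m, 0 < m → m - m ^ 3 = μ → IsKLSolution μ (solOfRoot m) :=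
    fun m hm hroot ↦ isKLSolution_iff.2 ⟨m, hm, hroot, rfl⟩
  refine ⟨⟨?_, ?_⟩, ?_, ?_⟩
  · rintro ⟨k, l, h⟩
    obtain ⟨m, hm, hroot, -⟩ := (isKLSolution_iff (p := (k, l))).1 h
    exact hroot ▸ self_sub_cube_le hm.le
  · intro h
    obtain ⟨m, hm, hroot⟩ := exists_pos_self_sub_cube_eq h
    exact ⟨_, _, hsol m hm hroot⟩
  · intro hμ
    obtain ⟨m, hm, hroot⟩ :=
      exists_pos_self_sub_cube_eq (hμ.elim (fun h ↦ h.trans (by positivity)) le_of_eq)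
    refine ⟨solOfRoot m, hsol m hm hroot, fun p hp ↦ ?_⟩
    obtain ⟨m', hm', hroot', rfl⟩ := isKLSolution_iff.1 hp
    rw [pos_self_sub_cube_eq_unique hμ hm' hm hroot' hroot]
  · rintro ⟨h0, hlt⟩
    obtain ⟨a, b, hab, ha, hb, hra, hrb, hroots⟩ := exists_two_pos_self_sub_cube_eq h0 hlt
    refine ⟨solOfRoot a, solOfRoot b, fun h ↦ hab ?_, hsol a ha hra, hsol b hb hrb, fun r hr ↦ ?_⟩
    · simpa [solOfRoot, sqrt_inj ha.le hb.le] using congrArg Prod.fst h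
    · obtain ⟨m, hm, hroot, rfl⟩ := isKLSolution_iff.1 hr
      rcases hroots m hm hroot with rfl | rfl <;> simp
end

section
/- If μ = 0 and k, l > 0 satisfy k² + l²/3 ≤ (4/3)k³l, then k² + l²/3 ≥ 4/3. -/
/-!
AM-GM on the four terms `k²/3, k²/3, k²/3, l²/3` gives `(4/3) k³ l ≤ (3/4) S²` for `S = k² + l²/3`,
so the constraint `S ≤ (4/3) k³ l` forces `S ≤ (3/4) S²`, i.e. `S ≥ 4/3` once `S > 0`.
The bound is attained at `k = l = 1`.
-/

theorem sixteen_mul_pow_three_mul_le_sq (k l : ℝ) : 16 * k ^ 3 * l ≤ (3 * k ^ 2 + l ^ 2) ^ 2 := by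
  have key : (3 * k ^ 2 + l ^ 2) ^ 2 - 16 * k ^ 3 * l = (k - l) ^ 2 * (8 * k ^ 2 + (k + l) ^ 2) := by
    ring
  have : 0 ≤ (k - l) ^ 2 * (8 * k ^ 2 + (k + l) ^ 2) := by positivity
  linarith

theorem nehari_lower_bound_mu_zero_general (k l : ℝ) (hl : 0 < l)
    (h : k ^ 2 + l ^ 2 / 3 ≤ (4 / 3) * k ^ 3 * l) :
    k ^ 2 + l ^ 2 / 3 ≥ 4 / 3 := by
  set S := k ^ 2 + l ^ 2 / 3 with hS
  have hS_pos : 0 < S := by positivity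
  have hS_le_sq : S ≤ 3 / 4 * S ^ 2 := by
    have amgm := sixteen_mul_pow_three_mul_le_sq k l
    calc S ≤ 4 / 3 * k ^ 3 * l := h
      _ ≤ 3 / 4 * S ^ 2 := by rw [hS]; linarith
  nlinarith

theorem nehari_lower_bound_mu_zero (k l : ℝ) (hk : 0 < k) (hl : 0 < l)
    (h : k ^ 2 + l ^ 2 / 3 ≤ (4 / 3) * k ^ 3 * l) :
    k ^ 2 + l ^ 2 / 3 ≥ 4 / 3 :=
  nehari_lower_bound_mu_zero_general k l hl h
end

section
/- If 0 < μ < √6/9, then the function ψ(m) = (3m² + 1)²/(3(4m³ + μ)) on (0,∞) has exactly two critical points m₁ < m₂, both solving m³ − m + μ = 0, and its global minimum on (0,∞) is attained at m₂ with ψ(m₂) < 1/(3μ) = lim_{m→0⁺} ψ(m). -/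
/-!
Up to a positive factor, `ψ'(m)` is the cubic `p(m) = m³ - m + μ`. Since `p(0) = μ > 0`,
`p(1) = μ > 0` and `p(√6/3) = μ - √6/9 < 0`, `p` has positive roots `m₁ < √6/3 < m₂`, and its third
root `-(m₁ + m₂)` is negative; so `ψ` increases on `[0, m₁]`, decreases on `[m₁, m₂]` and increases on
`[m₂, ∞)`. At a root, `μ = m - m³` gives `ψ(m) = (3m² + 1)/(3m)`, which is below `ψ(0) = 1/(3μ)`
exactly when `3m² > 2`; this holds at `m₂`, so `ψ(m₂)` is also below every value of `ψ` on `(0, m₁]`.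
-/

open Set Filter Topology

theorem cubic_eq_mul_of_roots {a b μ : ℝ} (ha : a ^ 3 - a + μ = 0) (hb : b ^ 3 - b + μ = 0)
    (hab : a ≠ b) (x : ℝ) : x ^ 3 - x + μ = (x - a) * (x - b) * (x + a + b) := by
  have hsum : a ^ 2 + a * b + b ^ 2 = 1 := by
    have h : (a - b) * (a ^ 2 + a * b + b ^ 2) = (a - b) * 1 := by linear_combination ha - hb
    exact mul_left_cancel₀ (sub_ne_zero.2 hab) h
  linear_combination ha + (x - a) * hsum

theorem exists_roots_cubic_of_neg {μ c : ℝ} (hμ : 0 < μ) (hc : 0 < c) (hpc : c ^ 3 - c + μ < 0) :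
    ∃ m₁ m₂ : ℝ, 0 < m₁ ∧ m₁ < c ∧ c < m₂ ∧ m₁ ^ 3 - m₁ + μ = 0 ∧ m₂ ^ 3 - m₂ + μ = 0 := by
  have hp : Continuous fun x : ℝ => x ^ 3 - x + μ := by fun_prop
  have hc1 : c ≤ 1 := by nlinarith [mul_pos hc hc]
  obtain ⟨m₁, ⟨hm₁, hm₁c⟩, hr₁⟩ :=
    intermediate_value_Ioo' hc.le hp.continuousOn (show (0 : ℝ) ∈ Ioo _ _ by simp [hpc, hμ])
  obtain ⟨m₂, ⟨hcm₂, -⟩, hr₂⟩ :=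
    intermediate_value_Ioo hc1 hp.continuousOn (show (0 : ℝ) ∈ Ioo _ _ by simp [hpc, hμ])
  exact ⟨m₁, m₂, hm₁, hm₁c, hcm₂, hr₁, hr₂⟩

noncomputable def psi (μ m : ℝ) : ℝ := (3 * m ^ 2 + 1) ^ 2 / (3 * (4 * m ^ 3 + μ))

section Psi

variable {μ m : ℝ}

theorem hasDerivAt_psi (h : 4 * m ^ 3 + μ ≠ 0) :
    HasDerivAt (psi μ)
      (36 * m * (3 * m ^ 2 + 1) / (3 * (4 * m ^ 3 + μ)) ^ 2 * (m ^ 3 - m + μ)) m := by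
  have hnum : HasDerivAt (fun x : ℝ => (3 * x ^ 2 + 1) ^ 2) (2 * (3 * m ^ 2 + 1) * (6 * m)) m :=
    ((((hasDerivAt_pow 2 m).const_mul 3).add_const 1).pow 2).congr_deriv (by push_cast; ring)
  have hden : HasDerivAt (fun x : ℝ => 3 * (4 * x ^ 3 + μ)) (36 * m ^ 2) m :=
    ((((hasDerivAt_pow 3 m).const_mul 4).add_const μ).const_mul 3).congr_deriv (by push_cast; ring)
  refine (hnum.div hden (by positivity)).congr_deriv ?_
  field_simp
  ring

theorem hasDerivAt_psi_of_nonneg (hμ : 0 < μ) (hm : 0 ≤ m) :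
    HasDerivAt (psi μ)
      (36 * m * (3 * m ^ 2 + 1) / (3 * (4 * m ^ 3 + μ)) ^ 2 * (m ^ 3 - m + μ)) m :=
  hasDerivAt_psi (by positivity)

theorem deriv_psi_eq_zero_iff (hμ : 0 < μ) (hm : 0 < m) :
    deriv (psi μ) m = 0 ↔ m ^ 3 - m + μ = 0 := by
  rw [(hasDerivAt_psi_of_nonneg hμ hm.le).deriv, mul_eq_zero, or_iff_right (by positivity)]

theorem monotoneOn_psi {s : Set ℝ} (hμ : 0 < μ) (hs : Convex ℝ s) (hs0 : s ⊆ Ici 0)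
    (hp : ∀ m ∈ interior s, 0 ≤ m ^ 3 - m + μ) : MonotoneOn (psi μ) s := by
  have hd : ∀ m ∈ s, HasDerivAt (psi μ) _ m := fun m hm => hasDerivAt_psi_of_nonneg hμ (hs0 hm)
  refine monotoneOn_of_deriv_nonneg hs (fun m hm => (hd m hm).continuousAt.continuousWithinAt)
    (fun m hm => (hd m (interior_subset hm)).differentiableAt.differentiableWithinAt)
    fun m hm => ?_
  have : 0 ≤ m := hs0 (interior_subset hm)
  rw [(hd m (interior_subset hm)).deriv]
  exact mul_nonneg (by positivity) (hp m hm)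

theorem antitoneOn_psi {s : Set ℝ} (hμ : 0 < μ) (hs : Convex ℝ s) (hs0 : s ⊆ Ici 0)
    (hp : ∀ m ∈ interior s, m ^ 3 - m + μ ≤ 0) : AntitoneOn (psi μ) s := by
  have hd : ∀ m ∈ s, HasDerivAt (psi μ) _ m := fun m hm => hasDerivAt_psi_of_nonneg hμ (hs0 hm)
  refine antitoneOn_of_deriv_nonpos hs (fun m hm => (hd m hm).continuousAt.continuousWithinAt)
    (fun m hm => (hd m (interior_subset hm)).differentiableAt.differentiableWithinAt)
    fun m hm => ?_
  have : 0 ≤ m := hs0 (interior_subset hm)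
  rw [(hd m (interior_subset hm)).deriv]
  exact mul_nonpos_of_nonneg_of_nonpos (by positivity) (hp m hm)

theorem psi_zero (μ : ℝ) : psi μ 0 = 1 / (3 * μ) := by
  simp [psi]

theorem tendsto_psi_zero (hμ : μ ≠ 0) : Tendsto (psi μ) (𝓝[>] 0) (𝓝 (1 / (3 * μ))) := by
  rw [← psi_zero]
  exact (hasDerivAt_psi (by simpa using hμ)).continuousAt.continuousWithinAt.tendsto

theorem psi_lt_psi_zero_of_root (hμ : 0 < μ) (hm : 0 < m) (hr : m ^ 3 - m + μ = 0)
    (h : 2 < 3 * m ^ 2) : psi μ m < psi μ 0 := by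
  have hgap : 3 * (4 * m ^ 3 + μ) - (3 * m ^ 2 + 1) ^ 2 * (3 * μ) =
      3 * m ^ 3 * (3 * m ^ 2 - 2) * (3 * m ^ 2 + 1) := by
    linear_combination (-3 * (9 * m ^ 4 + 6 * m ^ 2)) * hr
  have : 0 < 3 * m ^ 2 - 2 := by linarith
  rw [psi_zero, psi, div_lt_div_iff₀ (by positivity) (by positivity)]
  linarith [show 0 < 3 * m ^ 3 * (3 * m ^ 2 - 2) * (3 * m ^ 2 + 1) by positivity]

theorem psi_le_of_cubic_factor {m₁ m₂ : ℝ} (hμ : 0 < μ) (hm₁ : 0 < m₁) (hm₁₂ : m₁ < m₂)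
    (hfac : ∀ x : ℝ, x ^ 3 - x + μ = (x - m₁) * (x - m₂) * (x + m₁ + m₂))
    (hm₂ : psi μ m₂ < psi μ 0) (hm : 0 < m) : psi μ m₂ ≤ psi μ m := by
  have hpos : ∀ x ∈ Ioi (0 : ℝ), 0 < x + m₁ + m₂ := fun x hx => by
    have := mem_Ioi.1 hx; linarith
  rcases le_or_gt m m₁ with h₁ | h₁
  · refine hm₂.le.trans (monotoneOn_psi hμ (convex_Icc 0 m₁) Icc_subset_Ici_self ?_
      (left_mem_Icc.2 hm₁.le) ⟨hm.le, h₁⟩ hm.le)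
    rw [interior_Icc]
    intro x hx
    rw [hfac]
    exact mul_nonneg (mul_nonneg_of_nonpos_of_nonpos (by linarith [hx.2]) (by linarith [hx.2]))
      (hpos x hx.1).le
  rcases le_or_gt m m₂ with h₂ | h₂
  · refine antitoneOn_psi hμ (convex_Icc m₁ m₂) (fun x hx => hm₁.le.trans hx.1) ?_
      ⟨h₁.le, h₂⟩ (right_mem_Icc.2 hm₁₂.le) h₂
    rw [interior_Icc]
    intro x hx
    rw [hfac]
    exact mul_nonpos_of_nonpos_of_nonneg
      (mul_nonpos_of_nonneg_of_nonpos (by linarith [hx.1]) (by linarith [hx.2]))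
      (hpos x (hm₁.trans hx.1)).le
  · refine monotoneOn_psi hμ (convex_Ici m₂) (Ici_subset_Ici.2 (hm₁.trans hm₁₂).le) ?_
      self_mem_Ici h₂.le h₂.le
    rw [interior_Ici]
    intro x hx
    have hx : m₂ < x := hx
    rw [hfac]
    exact mul_nonneg (mul_nonneg (by linarith) (by linarith)) (hpos x (show 0 < x by linarith)).le

end Psi

theorem psi_critical_points (μ : ℝ) (hμ0 : 0 < μ) (hμ : μ < Real.sqrt 6 / 9)
    (ψ : ℝ → ℝ) (hψ : ∀ m, ψ m = (3 * m ^ 2 + 1) ^ 2 / (3 * (4 * m ^ 3 + μ))) :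
    ∃ m₁ m₂ : ℝ, 0 < m₁ ∧ m₁ < m₂ ∧
      m₁ ^ 3 - m₁ + μ = 0 ∧ m₂ ^ 3 - m₂ + μ = 0 ∧
      (∀ m : ℝ, 0 < m → (deriv ψ m = 0 ↔ (m = m₁ ∨ m = m₂))) ∧
      (∀ m : ℝ, 0 < m → ψ m₂ ≤ ψ m) ∧
      ψ m₂ < 1 / (3 * μ) ∧
      Filter.Tendsto ψ (nhdsWithin 0 (Set.Ioi 0)) (nhds (1 / (3 * μ))) := by
  obtain rfl : ψ = psi μ := funext hψ
  have hc : (Real.sqrt 6 / 3) ^ 2 = 2 / 3 := by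
    rw [div_pow, Real.sq_sqrt (by norm_num)]; norm_num
  obtain ⟨m₁, m₂, hm₁, hm₁c, hcm₂, hr₁, hr₂⟩ :=
    exists_roots_cubic_of_neg (c := Real.sqrt 6 / 3) hμ0 (by positivity)
      (by linear_combination (Real.sqrt 6 / 3) * hc + hμ)
  have hm₁₂ : m₁ < m₂ := hm₁c.trans hcm₂
  have hfac := cubic_eq_mul_of_roots hr₁ hr₂ hm₁₂.ne
  have hmin : psi μ m₂ < psi μ 0 :=
    psi_lt_psi_zero_of_root hμ0 (hm₁.trans hm₁₂) hr₂ (by nlinarith [hc, hm₁.trans hm₁c])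
  refine ⟨m₁, m₂, hm₁, hm₁₂, hr₁, hr₂, fun m hm => ?_,
    fun m hm => psi_le_of_cubic_factor hμ0 hm₁ hm₁₂ hfac hmin hm,
    psi_zero μ ▸ hmin, tendsto_psi_zero hμ0.ne'⟩
  have : m + m₁ + m₂ ≠ 0 := by linarith
  rw [deriv_psi_eq_zero_iff hμ0 hm, hfac, mul_eq_zero, mul_eq_zero, sub_eq_zero, sub_eq_zero,
    or_iff_left this]
end

section
/- If √6/9 < μ ≤ 2√3/9 then ψ(m) = (3m² + 1)²/(3(4m³ + μ)) satisfies ψ(m) > 1/(3μ) for every m > 0. -/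
/-!
Clearing denominators, `ψ(m) > 1/(3μ)` becomes `3m² (μ(9m² + 6) - 4m) > 0`. By AM-GM,
`9m² + 6 ≥ 6√6 m`, so `μ(9m² + 6) ≥ 6√6 μ m > 6√6 (√6/9) m = 4m` as soon as `μ > √6/9`.
-/

open Real

lemma six_mul_sqrt_six_mul_le (m : ℝ) : 6 * √6 * m ≤ 9 * m ^ 2 + 6 := by
  have h6 : √6 ^ 2 = 6 := sq_sqrt (by norm_num)
  nlinarith [sq_nonneg (3 * m - √6)]

lemma four_mul_lt_of_sqrt_six_div_nine_lt {μ m : ℝ} (hμ : √6 / 9 < μ) (hm : 0 < m) :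
    4 * m < μ * (9 * m ^ 2 + 6) := by
  have h6 : √6 * √6 = 6 := mul_self_sqrt (by norm_num)
  have hμ0 : 0 < μ := (by positivity : (0 : ℝ) < √6 / 9).trans hμ
  calc 4 * m = √6 / 9 * (6 * √6 * m) := by linear_combination (-2 / 3 * m) * h6
    _ < μ * (6 * √6 * m) := mul_lt_mul_of_pos_right hμ (by positivity)
    _ ≤ μ * (9 * m ^ 2 + 6) := mul_le_mul_of_nonneg_left (six_mul_sqrt_six_mul_le m) hμ0.le

theorem psi_strictly_above_general (μ : ℝ) (hμ1 : Real.sqrt 6 / 9 < μ)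
    (m : ℝ) (hm : 0 < m) :
    (3 * m ^ 2 + 1) ^ 2 / (3 * (4 * m ^ 3 + μ)) > 1 / (3 * μ) := by
  have hμ0 : 0 < μ := (by positivity : (0 : ℝ) < √6 / 9).trans hμ1
  have key := four_mul_lt_of_sqrt_six_div_nine_lt hμ1 hm
  rw [gt_iff_lt, div_lt_div_iff₀ (by positivity) (by positivity)]
  linear_combination (3 * m ^ 2) * key

theorem psi_strictly_above (μ : ℝ) (hμ1 : Real.sqrt 6 / 9 < μ)
    (hμ2 : μ ≤ 2 * Real.sqrt 3 / 9) (m : ℝ) (hm : 0 < m) :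
    (3 * m ^ 2 + 1) ^ 2 / (3 * (4 * m ^ 3 + μ)) > 1 / (3 * μ) :=
  psi_strictly_above_general μ hμ1 m hm
end

section
/- Let μ ∈ ℝ and let k, l > 0 satisfy k² + (1/3)l² ≤ (4/3)k³l + (μ/3)l⁴. Define k̄ = k·√((3k² + l²)/(l(4k³ + μl³))) and l̄ = √(l(3k² + l²)/(4k³ + μl³)). Then 0 < k̄ ≤ k, 0 < l̄ ≤ l, k/l = k̄/l̄, and k̄² + (1/3)l̄² = (4/3)k̄³l̄ + (μ/3)l̄⁴. -/
/-!
The two sides of the curve equation are homogeneous in `(k, l)`, of degrees 2 and 4, so on the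
ray through `(k, l)` they agree at the scale `t` with
`t ^ 2 = (k ^ 2 + l ^ 2 / 3) / ((4 / 3) k ^ 3 l + (μ / 3) l ^ 4)`; the hypothesis says `t ≤ 1`,
and `(kbar, lbar) = (t k, t l)`.
-/

open Real

lemma sqrt_mul_div_eq_mul_sqrt_div {l : ℝ} (hl : 0 ≤ l) (a b : ℝ) :
    √(l * a / b) = l * √(a / (l * b)) := by
  rcases hl.eq_or_lt with rfl | hl
  · simp
  rw [← sqrt_sq hl.le, ← sqrt_mul (sq_nonneg l), sqrt_sq hl.le]
  congr 1
  field_simp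

lemma curve_eq_of_sq_mul_eq (μ k l t : ℝ)
    (ht : t ^ 2 * ((4 / 3) * k ^ 3 * l + (μ / 3) * l ^ 4) = k ^ 2 + (1 / 3) * l ^ 2) :
    (t * k) ^ 2 + (1 / 3) * (t * l) ^ 2 =
      (4 / 3) * (t * k) ^ 3 * (t * l) + (μ / 3) * (t * l) ^ 4 := by
  linear_combination (-t ^ 2) * ht

theorem rescaling_to_curve (μ k l : ℝ) (hk : 0 < k) (hl : 0 < l)
    (h : k ^ 2 + (1 / 3) * l ^ 2 ≤ (4 / 3) * k ^ 3 * l + (μ / 3) * l ^ 4) :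
    let kbar := k * Real.sqrt ((3 * k ^ 2 + l ^ 2) / (l * (4 * k ^ 3 + μ * l ^ 3)))
    let lbar := Real.sqrt (l * (3 * k ^ 2 + l ^ 2) / (4 * k ^ 3 + μ * l ^ 3))
    0 < kbar ∧ kbar ≤ k ∧ 0 < lbar ∧ lbar ≤ l ∧ k / l = kbar / lbar ∧
      kbar ^ 2 + (1 / 3) * lbar ^ 2 = (4 / 3) * kbar ^ 3 * lbar + (μ / 3) * lbar ^ 4 := by
  have hQ : 0 < 3 * k ^ 2 + l ^ 2 := by positivity
  have hQP : 3 * k ^ 2 + l ^ 2 ≤ l * (4 * k ^ 3 + μ * l ^ 3) := by linear_combination 3 * h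
  have hP : 0 < l * (4 * k ^ 3 + μ * l ^ 3) := hQ.trans_le hQP
  set A := (3 * k ^ 2 + l ^ 2) / (l * (4 * k ^ 3 + μ * l ^ 3))
  have hA : 0 < A := div_pos hQ hP
  set t := √A
  have ht : 0 < t := sqrt_pos.2 hA
  have ht1 : t ≤ 1 := sqrt_le_one.2 ((div_le_one hP).2 hQP)
  have htA : t ^ 2 * ((4 / 3) * k ^ 3 * l + (μ / 3) * l ^ 4) = k ^ 2 + (1 / 3) * l ^ 2 := by
    rw [sq_sqrt hA.le]
    linear_combination (1 / 3) * div_mul_cancel₀ (3 * k ^ 2 + l ^ 2) hP.ne'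
  intro kbar lbar
  obtain ⟨hkbar, hlbar⟩ : kbar = t * k ∧ lbar = t * l :=
    ⟨mul_comm k t, (sqrt_mul_div_eq_mul_sqrt_div hl.le _ _).trans (mul_comm l t)⟩
  rw [hkbar, hlbar]
  exact ⟨by positivity, mul_le_of_le_one_left hk.le ht1, by positivity,
    mul_le_of_le_one_left hl.le ht1, (mul_div_mul_left k l ht.ne').symm,
    curve_eq_of_sq_mul_eq μ k l t htA⟩
end

section
/- If 0 < μ < √6/9 and (k₁, l₁), (k₂, l₂) with k₁ < k₂ are the two solutions of the system kl = 1, μl³ + k³ = l, k, l > 0, then every pair (k, l) of positive reals satisfying k² + (1/3)l² ≤ (4/3)k³l + (μ/3)l⁴ obeys k² + (1/3)l² ≥ k₂² + (1/3)l₂², and moreover k₂² + (1/3)l₂² < 1/(3μ). -/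
/-!
With `m = k²`, the solutions of `kl = 1, μl³ + k³ = l` are the positive roots of
`m³ - m + μ = 0`, and `k² + l²/3 = m + 1/(3m)` on them. For the larger root `m₂` the
hypothesis `μ < √6/9` forces `3m₂² > 2`, which is also exactly `m₂ + 1/(3m₂) < 1/(3μ)`.
Writing `F`, `G` for the quadratic and quartic parts, `9m₂ F² - 3(3m₂² + 1) G` factors as
`(k - m₂l)²` times a quadratic form that is positive for `k, l > 0` once `3m₂² > 2`.
Hence `F² ≥ F(k₂, l₂) G`, and on the Nehari set `F ≤ G` this gives `F ≥ F(k₂, l₂)`.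
-/

noncomputable def quadraticPart (k l : ℝ) : ℝ := k ^ 2 + (1 / 3) * l ^ 2

noncomputable def quarticPart (μ k l : ℝ) : ℝ := (4 / 3) * k ^ 3 * l + (μ / 3) * l ^ 4

theorem sq_isRoot_of_solution {μ k l : ℝ} (hkl : k * l = 1) (h : μ * l ^ 3 + k ^ 3 = l) :
    (k ^ 2) ^ 3 - k ^ 2 + μ = 0 := by
  linear_combination k ^ 3 * h + (k ^ 2 - μ * (1 + k * l + k ^ 2 * l ^ 2)) * hkl

theorem quadraticPart_of_mul_eq_one {k l : ℝ} (hkl : k * l = 1) :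
    quadraticPart k l = (3 * (k ^ 2) ^ 2 + 1) / (3 * k ^ 2) := by
  have hk : k ≠ 0 := left_ne_zero_of_mul_eq_one hkl
  rw [quadraticPart, eq_div_iff (by positivity)]
  linear_combination (k * l + 1) * hkl

section Cubic

variable {μ a b : ℝ}

theorem one_lt_three_mul_sq_of_isRoot_of_lt (ha : 0 ≤ a) (hab : a < b)
    (hra : a ^ 3 - a + μ = 0) (hrb : b ^ 3 - b + μ = 0) : 1 < 3 * b ^ 2 := by
  have hsum : a ^ 2 + a * b + b ^ 2 = 1 := by
    have : (b - a) * (a ^ 2 + a * b + b ^ 2 - 1) = 0 := by linear_combination hrb - hra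
    linarith [(mul_eq_zero.mp this).resolve_left (sub_ne_zero.mpr hab.ne')]
  nlinarith [mul_le_mul_of_nonneg_left hab.le ha]

/-- `m ↦ m - m³` decreases past `1/√3` and equals `√6/9` at `m = √(2/3)`. -/
theorem two_lt_three_mul_sq_of_isRoot (hb : 0 ≤ b) (hb3 : 1 ≤ 3 * b ^ 2)
    (hrb : b ^ 3 - b + μ = 0) (hμ : μ < √6 / 9) : 2 < 3 * b ^ 2 := by
  by_contra! hle
  have hr : √6 ^ 2 = 6 := Real.sq_sqrt (by norm_num)
  have h3b : 3 * b ≤ √6 := by nlinarith [Real.sqrt_nonneg 6]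
  have hrb' : √6 * b ≤ 2 := by nlinarith [Real.sqrt_nonneg 6]
  nlinarith [mul_nonneg (sub_nonneg.mpr h3b) (sub_nonneg.mpr hb3),
    mul_nonneg hb (sub_nonneg.mpr hrb')]

theorem three_mul_lt_of_isRoot (hb : 0 < b) (hrb : b ^ 3 - b + μ = 0) (h2 : 2 < 3 * b ^ 2) :
    3 * μ < b := by
  nlinarith

theorem quarticPart_mul_le_sq (hb : 0 < b) (hrb : b ^ 3 - b + μ = 0) (h2 : 2 < 3 * b ^ 2)
    {k l : ℝ} (hk : 0 < k) (hl : 0 < l) :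
    (3 * b ^ 2 + 1) * quarticPart μ k l ≤ 3 * b * quadraticPart k l ^ 2 := by
  have hfactor : 9 * b * quadraticPart k l ^ 2 - 3 * (3 * b ^ 2 + 1) * quarticPart μ k l =
      (k - b * l) ^ 2 * (9 * b * k ^ 2 + (6 * b ^ 2 - 4) * k * l + (b - 3 * μ) * l ^ 2) := by
    unfold quadraticPart quarticPart
    linear_combination (3 * l ^ 2 * (k - b * l) ^ 2 - (3 * b ^ 2 + 1) * l ^ 4) * hrb
  have hpos : 0 < 9 * b * k ^ 2 + (6 * b ^ 2 - 4) * k * l + (b - 3 * μ) * l ^ 2 := by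
    have h3μ := three_mul_lt_of_isRoot hb hrb h2
    have : 0 ≤ (6 * b ^ 2 - 4) * k * l := by
      have : 0 ≤ 6 * b ^ 2 - 4 := by linarith
      positivity
    nlinarith [mul_pos hb (pow_pos hk 2), mul_nonneg (sub_pos.mpr h3μ).le (sq_nonneg l)]
  nlinarith [mul_nonneg (sq_nonneg (k - b * l)) hpos.le]

theorem le_quadraticPart_of_le_quarticPart (hb : 0 < b) (hrb : b ^ 3 - b + μ = 0)
    (h2 : 2 < 3 * b ^ 2) {k l : ℝ} (hk : 0 < k) (hl : 0 < l)
    (hN : quadraticPart k l ≤ quarticPart μ k l) :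
    (3 * b ^ 2 + 1) / (3 * b) ≤ quadraticPart k l := by
  have hF : 0 < quadraticPart k l := by unfold quadraticPart; positivity
  rw [div_le_iff₀ (by positivity)]
  nlinarith [quarticPart_mul_le_sq hb hrb h2 hk hl,
    mul_le_mul_of_nonneg_left hN (by positivity : (0 : ℝ) ≤ 3 * b ^ 2 + 1)]

theorem div_lt_inv_three_mul_of_isRoot (hμ : 0 < μ) (hb : 0 < b) (hrb : b ^ 3 - b + μ = 0)
    (h2 : 2 < 3 * b ^ 2) : (3 * b ^ 2 + 1) / (3 * b) < 1 / (3 * μ) := by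
  rw [div_lt_div_iff₀ (by positivity) (by positivity)]
  nlinarith [mul_pos (pow_pos hb 3) (sub_pos.mpr h2)]

end Cubic

theorem nehari_lower_bound_small_mu_general (μ : ℝ) (hμ0 : 0 < μ) (hμ : μ < Real.sqrt 6 / 9)
    (k₁ l₁ k₂ l₂ : ℝ) (hk₁ : 0 < k₁)
    (hlt : k₁ < k₂)
    (hsol₁ : k₁ * l₁ = 1 ∧ μ * l₁ ^ 3 + k₁ ^ 3 = l₁)
    (hsol₂ : k₂ * l₂ = 1 ∧ μ * l₂ ^ 3 + k₂ ^ 3 = l₂) :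
    (∀ k l : ℝ, 0 < k → 0 < l →
      k ^ 2 + (1 / 3) * l ^ 2 ≤ (4 / 3) * k ^ 3 * l + (μ / 3) * l ^ 4 →
      k ^ 2 + (1 / 3) * l ^ 2 ≥ k₂ ^ 2 + (1 / 3) * l₂ ^ 2) ∧
    k₂ ^ 2 + (1 / 3) * l₂ ^ 2 < 1 / (3 * μ) := by
  have hroot₁ := sq_isRoot_of_solution hsol₁.1 hsol₁.2
  have hroot₂ := sq_isRoot_of_solution hsol₂.1 hsol₂.2
  have hlt_sq : k₁ ^ 2 < k₂ ^ 2 := pow_lt_pow_left₀ hlt hk₁.le two_ne_zero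
  have hm : 0 < k₂ ^ 2 := (pow_pos hk₁ 2).trans hlt_sq
  have h1 := one_lt_three_mul_sq_of_isRoot_of_lt (sq_nonneg k₁) hlt_sq hroot₁ hroot₂
  have h2 := two_lt_three_mul_sq_of_isRoot hm.le h1.le hroot₂ hμ
  have hF₂ : k₂ ^ 2 + (1 / 3) * l₂ ^ 2 = (3 * (k₂ ^ 2) ^ 2 + 1) / (3 * k₂ ^ 2) :=
    quadraticPart_of_mul_eq_one hsol₂.1
  rw [hF₂]
  exact ⟨fun k l hk hl hN => le_quadraticPart_of_le_quarticPart hm hroot₂ h2 hk hl hN,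
    div_lt_inv_three_mul_of_isRoot hμ0 hm hroot₂ h2⟩

theorem nehari_lower_bound_small_mu (μ : ℝ) (hμ0 : 0 < μ) (hμ : μ < Real.sqrt 6 / 9)
    (k₁ l₁ k₂ l₂ : ℝ) (hk₁ : 0 < k₁) (hl₁ : 0 < l₁) (hk₂ : 0 < k₂) (hl₂ : 0 < l₂)
    (hlt : k₁ < k₂)
    (hsol₁ : k₁ * l₁ = 1 ∧ μ * l₁ ^ 3 + k₁ ^ 3 = l₁)
    (hsol₂ : k₂ * l₂ = 1 ∧ μ * l₂ ^ 3 + k₂ ^ 3 = l₂)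
    (hall : ∀ k l : ℝ, 0 < k → 0 < l → k * l = 1 → μ * l ^ 3 + k ^ 3 = l →
      (k = k₁ ∧ l = l₁) ∨ (k = k₂ ∧ l = l₂)) :
    (∀ k l : ℝ, 0 < k → 0 < l →
      k ^ 2 + (1 / 3) * l ^ 2 ≤ (4 / 3) * k ^ 3 * l + (μ / 3) * l ^ 4 →
      k ^ 2 + (1 / 3) * l ^ 2 ≥ k₂ ^ 2 + (1 / 3) * l₂ ^ 2) ∧
    k₂ ^ 2 + (1 / 3) * l₂ ^ 2 < 1 / (3 * μ) :=
  nehari_lower_bound_small_mu_general μ hμ0 hμ k₁ l₁ k₂ l₂ hk₁ hlt hsol₁ hsol₂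
end

section
/- If √6/9 < μ ≤ 2√3/9, then every pair (k, l) of positive reals satisfying k² + (1/3)l² ≤ (4/3)k³l + (μ/3)l⁴ obeys k² + (1/3)l² > 1/(3μ). -/
/-!
Write `S = k² + l²/3`. Since `3μS² = 3μk⁴ + 2μk²l² + (μ/3)l⁴`, the hypothesis `S ≤ (4/3)k³l + (μ/3)l⁴`
gives `S < 3μS²` as soon as `(4/3)kl < μ(3k² + 2l²)`. By AM-GM `3k² + 2l² ≥ 2√6 kl`, and
`2√6 μ > 2√6 · √6/9 = 4/3`. Dividing `S < 3μS²` by `S > 0` yields `3μS > 1`.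
-/

lemma two_sqrt_six_mul_le (k l : ℝ) : 2 * Real.sqrt 6 * (k * l) ≤ 3 * k ^ 2 + 2 * l ^ 2 := by
  have h6 : Real.sqrt 6 ^ 2 = 6 := Real.sq_sqrt (by norm_num)
  nlinarith [sq_nonneg (3 * k - Real.sqrt 6 * l)]

lemma four_thirds_mul_lt {μ k l : ℝ} (hμ : Real.sqrt 6 / 9 < μ) (hk : 0 < k) (hl : 0 < l) :
    (4 / 3) * (k * l) < μ * (3 * k ^ 2 + 2 * l ^ 2) := by
  have h6 : Real.sqrt 6 * Real.sqrt 6 = 6 := Real.mul_self_sqrt (by norm_num)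
  calc (4 / 3) * (k * l) = Real.sqrt 6 / 9 * (2 * Real.sqrt 6 * (k * l)) := by
        linear_combination (-(2 / 9) * (k * l)) * h6
    _ < μ * (2 * Real.sqrt 6 * (k * l)) := by gcongr
    _ ≤ μ * (3 * k ^ 2 + 2 * l ^ 2) :=
        mul_le_mul_of_nonneg_left (two_sqrt_six_mul_le k l) (hμ.le.trans' (by positivity))

lemma quartic_lt_three_mul_sq {μ k l : ℝ} (hμ : Real.sqrt 6 / 9 < μ) (hk : 0 < k) (hl : 0 < l) :
    (4 / 3) * k ^ 3 * l + (μ / 3) * l ^ 4 < 3 * μ * (k ^ 2 + (1 / 3) * l ^ 2) ^ 2 := by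
  have h := mul_lt_mul_of_pos_left (four_thirds_mul_lt hμ hk hl) (pow_pos hk 2)
  linear_combination h

lemma one_div_lt_of_lt_mul_sq {c S : ℝ} (hc : 0 < c) (hS : 0 < S) (h : S < c * S ^ 2) :
    1 / c < S := by
  rw [div_lt_iff₀ hc]
  nlinarith

theorem nehari_lower_bound_large_mu_general (μ : ℝ) (hμ1 : Real.sqrt 6 / 9 < μ)
    (k l : ℝ) (hk : 0 < k) (hl : 0 < l)
    (h : k ^ 2 + (1 / 3) * l ^ 2 ≤ (4 / 3) * k ^ 3 * l + (μ / 3) * l ^ 4) :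
    k ^ 2 + (1 / 3) * l ^ 2 > 1 / (3 * μ) := by
  have hμ : 0 < μ := hμ1.trans' (by positivity)
  exact one_div_lt_of_lt_mul_sq (by positivity) (by positivity)
    (h.trans_lt (quartic_lt_three_mul_sq hμ1 hk hl))

theorem nehari_lower_bound_large_mu (μ : ℝ) (hμ1 : Real.sqrt 6 / 9 < μ)
    (hμ2 : μ ≤ 2 * Real.sqrt 3 / 9) (k l : ℝ) (hk : 0 < k) (hl : 0 < l)
    (h : k ^ 2 + (1 / 3) * l ^ 2 ≤ (4 / 3) * k ^ 3 * l + (μ / 3) * l ^ 4) :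
    k ^ 2 + (1 / 3) * l ^ 2 > 1 / (3 * μ) :=
  nehari_lower_bound_large_mu_general μ hμ1 k l hk hl h
end

section
/- For every s > 0 and 0 < μ < √6/9, define t(s) = √((3s² + 1)μ/(4s³ + μ)). Then at s = 2/(9μ) one has (3s² + 1)²μ/(4s³ + μ) < 1, i.e. the quantity ((3s²+1)²μ)/(4s³+μ) evaluated at s = 2/(9μ) is strictly less than 1. -/
/-! Clearing denominators at `s = 2 / (9μ)` gives
`4s³ + μ - (3s² + 1)²μ = 8 (2/27 - μ²) / (27 μ³)`, and `μ < √6 / 9` is exactly `μ² < 2/27`. -/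

lemma sq_lt_two_div_twentySeven_of_lt_sqrt_six_div_nine {μ : ℝ} (hμ0 : 0 ≤ μ)
    (hμ : μ < √6 / 9) : μ ^ 2 < 2 / 27 := by
  have h : (9 * μ) ^ 2 < 6 := (Real.lt_sqrt (by positivity)).1 (by linarith)
  linarith

lemma four_mul_cube_add_sub_sq_mul_eq_of_eq_two_div {μ s : ℝ} (hμ : μ ≠ 0)
    (hs : s = 2 / (9 * μ)) :
    4 * s ^ 3 + μ - (3 * s ^ 2 + 1) ^ 2 * μ = 8 * (2 / 27 - μ ^ 2) / (27 * μ ^ 3) := by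
  subst hs
  field_simp
  ring

theorem key_projection_inequality (μ : ℝ) (hμ0 : 0 < μ) (hμ : μ < Real.sqrt 6 / 9) :
    let s : ℝ := 2 / (9 * μ)
    (3 * s ^ 2 + 1) ^ 2 * μ / (4 * s ^ 3 + μ) < 1 := by
  intro s
  have hs : s = 2 / (9 * μ) := rfl
  have hden : 0 < 4 * s ^ 3 + μ := by rw [hs]; positivity
  have hgap : 0 < 4 * s ^ 3 + μ - (3 * s ^ 2 + 1) ^ 2 * μ := by
    rw [four_mul_cube_add_sub_sq_mul_eq_of_eq_two_div hμ0.ne' hs]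
    have := sq_lt_two_div_twentySeven_of_lt_sqrt_six_div_nine hμ0.le hμ
    exact div_pos (by linarith) (by positivity)
  rw [div_lt_one hden]
  linarith
end

section
/- Suppose k, l are positive reals (for N = 6, 2* = 3). If k² + (1/2)l² ≤ (3/2)k²l + (μ/2)l³ with 0 ≤ μ ≤ 1, then k² + (1/2)l² ≥ 3/2 − μ. -/
theorem nehari_lower_bound_N6 (μ k l : ℝ) (hμ0 : 0 ≤ μ) (hμ1 : μ ≤ 1)
    (hk : 0 < k) (hl : 0 < l)
    (h : k ^ 2 + (1 / 2) * l ^ 2 ≤ (3 / 2) * k ^ 2 * l + (μ / 2) * l ^ 3) :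
    k ^ 2 + (1 / 2) * l ^ 2 ≥ 3 / 2 - μ := by
  rcases le_or_gt l (2/3) with hc | hc
  · nlinarith [mul_nonneg (sq_nonneg k) (by linarith : (0:ℝ) ≤ 1 - 3/2*l),
      mul_nonneg hl.le (by linarith : (0:ℝ) ≤ 1 - μ),
      mul_pos (pow_pos hl 2) (by nlinarith : (0:ℝ) < 1 - μ*l)]
  · nlinarith [mul_nonneg (mul_nonneg (by linarith : (0:ℝ) ≤ 3 - 2*μ) (sq_nonneg (l-1))) (by linarith : (0:ℝ) ≤ l + 2),
      (by linarith : (0:ℝ) ≤ 3/2*l - 1), sq_nonneg k, pow_pos hl 2,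
      mul_nonneg (by linarith : (0:ℝ) ≤ 3/2*l - 1) (sq_nonneg k)]
end
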